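/- arXiv:2207.03924 — 5 statements merged into one kernel-verified Lean document; each statement's English description precedes it below -/
import Mathlib

section
/- Let G and G' be finite simple graphs without isolated vertices, on n and n' vertices respectively, and let t', t'' ∈ ℕ. Assume G' ≼[t'] G and G ≼[t''] G' for the standard Laplacians, i.e. n ≥ n' − t'' and n' ≥ n − t', with λ_k(G') ≤ λ_{k+t'}(G) for all 1 ≤ k ≤ n − t' and λ_k(G) ≤ λ_{k+t''}(G') for all 1 ≤ k ≤ n' − t''. If λ is an eigenvalue of the standard Laplacian Δ_{G'} with multiplicity μ > t' + t'', then λ is an eigenvalue of the standard Laplacian Δ_G with multiplicity at least μ − (t' + t''). -/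
open scoped Classical

noncomputable section

/-- Degree of a vertex. -/
def deg {V : Type*} [Fintype V] (G : SimpleGraph V) (u : V) : ℕ :=
  Nat.card {v | G.Adj u v}

/-- Standard (normalised) Laplacian. -/
def stdLap {V : Type*} [Fintype V] (G : SimpleGraph V) : Matrix V V ℝ :=
  fun u v =>
    if u = v then 1
    else if G.Adj u v then -(1 / Real.sqrt ((deg G u : ℝ) * (deg G v : ℝ)))
    else 0

/-- Signless standard Laplacian. -/
def stdLapP {V : Type*} [Fintype V] (G : SimpleGraph V) : Matrix V V ℝ :=
  fun u v =>
    if u = v then 1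
    else if G.Adj u v then 1 / Real.sqrt ((deg G u : ℝ) * (deg G v : ℝ))
    else 0

/-- Spectrum (multiset of eigenvalues, with algebraic multiplicity). -/
def spec {V : Type*} [Fintype V] (G : SimpleGraph V) : Multiset ℝ :=
  (stdLap G).charpoly.roots

def specP {V : Type*} [Fintype V] (G : SimpleGraph V) : Multiset ℝ :=
  (stdLapP G).charpoly.roots

/-- `eig G k` is the k-th smallest eigenvalue (1-based). -/
def eig {V : Type*} [Fintype V] (G : SimpleGraph V) (k : ℕ) : ℝ :=
  ((spec G).sort (· ≤ ·)).getD (k - 1) 0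

def eigP {V : Type*} [Fintype V] (G : SimpleGraph V) (k : ℕ) : ℝ :=
  ((specP G).sort (· ≤ ·)).getD (k - 1) 0

end

/-! Sort both spectra. The `μ` copies of `λ` in `spec G'` occupy consecutive positions
`a + 1, …, a + μ` of the sorted list. For `a + t' < k ≤ a + μ - t''` the two bracketings give
`λ = λ_{k-t'}(G') ≤ λ_k(G) ≤ λ_{k+t''}(G') = λ`, so `λ` occupies `μ - (t' + t'')` positions
of the sorted spectrum of `G`. -/

namespace Multiset

variable {α : Type*} [LinearOrder α]

theorem sort_eq_filter_lt_append_replicate (s : Multiset α) (x : α) :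
    s.sort =
      (s.filter (· < x)).sort ++ List.replicate (s.count x) x ++ (s.filter (x < ·)).sort := by
  refine List.Perm.eq_of_pairwise' (pairwise_sort s _) ?_ ?_
  · simp only [List.pairwise_append, pairwise_sort, List.pairwise_replicate, le_refl, mem_sort,
      mem_filter, List.mem_replicate, List.mem_append]
    grind
  · rw [← coe_eq_coe, sort_eq, ← coe_add, ← coe_add, sort_eq, sort_eq, coe_replicate,
      ← filter_eq', add_assoc]
    nth_rewrite 1 [← filter_add_not (· < x) s, ← filter_add_not (· = x) (s.filter (¬ · < x))]
    simp only [filter_filter]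
    congr 2 <;> apply filter_congr <;> grind

theorem card_filter_lt_add_count_le (s : Multiset α) (x : α) :
    card (s.filter (· < x)) + s.count x ≤ card s := by
  have := congrArg List.length (sort_eq_filter_lt_append_replicate s x)
  simp only [List.length_append, length_sort, List.length_replicate] at this
  omega

theorem getD_sort_eq_of_lt_count (s : Multiset α) {x : α} (d : α) {j : ℕ}
    (hj : j < s.count x) :
    s.sort.getD (card (s.filter (· < x)) + j) d = x := by
  rw [sort_eq_filter_lt_append_replicate s x, List.append_assoc,
    List.getD_append_right _ _ _ _ (by simp), List.getD_append _ _ _ _ (by simpa using hj)]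
  simp only [length_sort, add_tsub_cancel_left]
  exact List.getD_replicate _ hj

end Multiset

theorem List.le_count_of_getD_eq {α : Type*} [BEq α] [LawfulBEq α] {l : List α} {x d : α}
    {i m : ℕ} (hlen : i + m ≤ l.length) (h : ∀ c < m, l.getD (i + c) d = x) :
    m ≤ l.count x := by
  have hrep : (l.drop i).take m = List.replicate m x := by
    refine List.eq_replicate_iff.mpr ⟨by simp; omega, fun y hy => ?_⟩
    obtain ⟨c, hc, rfl⟩ := List.getElem_of_mem hy
    simp only [List.length_take, List.length_drop] at hc
    rw [List.getElem_take, List.getElem_drop, ← h c (by omega), List.getD_eq_getElem]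
  calc m = (List.replicate m x).count x := (List.count_replicate_self ..).symm
    _ ≤ l.count x := by
      rw [← hrep]
      exact ((List.take_sublist _ _).trans (List.drop_sublist _ _)).count_le x

theorem stdLap_isHermitian {V : Type*} [Fintype V] (G : SimpleGraph V) :
    (stdLap G).IsHermitian := by
  ext i j
  simp only [Matrix.conjTranspose_apply, star_trivial, stdLap]
  rcases eq_or_ne i j with rfl | h
  · simp
  · rw [if_neg (Ne.symm h), if_neg h, G.adj_comm, mul_comm]

theorem card_spec {V : Type*} [Fintype V] (G : SimpleGraph V) :
    Multiset.card (spec G) = Fintype.card V := by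
  rw [spec, ← (stdLap G).charpoly_natDegree_eq_dim]
  exact Polynomial.splits_iff_card_roots.mp (stdLap_isHermitian G).splits_charpoly

theorem exists_eig_eq_of_count_spec {V : Type*} [Fintype V] (G : SimpleGraph V) (x : ℝ) :
    ∃ a, a + (spec G).count x ≤ Fintype.card V ∧
      ∀ k, a < k → k ≤ a + (spec G).count x → eig G k = x := by
  refine ⟨_, card_spec G ▸ (spec G).card_filter_lt_add_count_le x, fun k hk₁ hk₂ => ?_⟩
  obtain ⟨j, rfl⟩ := Nat.exists_eq_add_of_lt hk₁
  exact (spec G).getD_sort_eq_of_lt_count 0 (by omega)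

theorem le_count_spec_of_eig_eq {V : Type*} [Fintype V] (G : SimpleGraph V) {x : ℝ} {i m : ℕ}
    (hm : i + m ≤ Fintype.card V) (h : ∀ k, i < k → k ≤ i + m → eig G k = x) :
    m ≤ (spec G).count x := by
  rw [← Multiset.sort_eq (spec G) (· ≤ ·), Multiset.coe_count]
  refine List.le_count_of_getD_eq (d := 0) (by rwa [Multiset.length_sort, card_spec])
    fun c hc => h (i + c + 1) (by omega) (by omega)

theorem stmt_0_general {V V' : Type*} [Fintype V] [Fintype V']
    (G : SimpleGraph V) (G' : SimpleGraph V')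
    (t' t'' : ℕ)
    (hcard1 : Fintype.card V ≥ Fintype.card V' - t'')
    (hle1 : ∀ k, 1 ≤ k → k ≤ Fintype.card V - t' → eig G' k ≤ eig G (k + t'))
    (hle2 : ∀ k, 1 ≤ k → k ≤ Fintype.card V' - t'' → eig G k ≤ eig G' (k + t''))
    (lam : ℝ) (μ : ℕ)
    (hmult : (spec G').count lam = μ) (hμ : t' + t'' < μ) :
    μ - (t' + t'') ≤ (spec G).count lam := by
  obtain ⟨a, haμ, heig'⟩ := exists_eig_eq_of_count_spec G' lam
  rw [hmult] at haμ heig'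
  refine le_count_spec_of_eig_eq G (i := a + t') (by omega) fun k hk₁ hk₂ => le_antisymm ?_ ?_
  · calc eig G k ≤ eig G' (k + t'') := hle2 k (by omega) (by omega)
      _ = lam := heig' _ (by omega) (by omega)
  · calc lam = eig G' (k - t') := (heig' _ (by omega) (by omega)).symm
      _ ≤ eig G (k - t' + t') := hle1 _ (by omega) (by omega)
      _ = eig G k := by rw [Nat.sub_add_cancel (by omega)]

/-- stability of eigenvalue multiplicity under two-sided
spectral bracketing (Proposition `mult.spec`). -/
theorem stmt_0 {V V' : Type*} [Fintype V] [Fintype V']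
    (G : SimpleGraph V) (G' : SimpleGraph V')
    (hG : ∀ v, 0 < deg G v) (hG' : ∀ v, 0 < deg G' v)
    (t' t'' : ℕ)
    (hcard1 : Fintype.card V ≥ Fintype.card V' - t'')
    (hcard2 : Fintype.card V' ≥ Fintype.card V - t')
    (hle1 : ∀ k, 1 ≤ k → k ≤ Fintype.card V - t' → eig G' k ≤ eig G (k + t'))
    (hle2 : ∀ k, 1 ≤ k → k ≤ Fintype.card V' - t'' → eig G k ≤ eig G' (k + t''))
    (lam : ℝ) (μ : ℕ)
    (hmult : (spec G').count lam = μ) (hμ : t' + t'' < μ) :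
    μ - (t' + t'') ≤ (spec G).count lam :=
  stmt_0_general G G' t' t'' hcard1 hle1 hle2 lam μ hmult hμ
end

section
/- Let r ≥ 2 and let K̂_r be the graph on 2r vertices obtained from the complete graph K_r by attaching a pendant edge to each of its r vertices. Then both (2r + 1 − √(4r+1))/(2r) and (2r + 1 + √(4r+1))/(2r) are eigenvalues of the standard Laplacian Δ_{K̂_r}, each with multiplicity at least r − 1. -/
open scoped Classical

/-- `hatK r` is the complete graph `K_r` (vertices `.inl i`) with a pendant
vertex `.inr i` attached to each vertex `.inl i`. -/
def hatK (r : ℕ) : SimpleGraph (Fin r ⊕ Fin r) where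
  Adj x y :=
    match x, y with
    | .inl i, .inl j => i ≠ j
    | .inl i, .inr j => i = j
    | .inr i, .inl j => i = j
    | .inr _, .inr _ => False
  symm := by
    constructor
    rintro (i | i) (j | j) h
    · exact h.symm
    · exact h.symm
    · exact h.symm
    · exact h
  loopless := by
    constructor
    rintro (i | i) h
    · exact h rfl
    · exact h

/-! If `∑ v = 0` then `A v = -v` for the adjacency matrix `A` of `K_r`, so `Δ` maps the plane of
vectors `(a • v, b • v)` (clique part, pendant part) to itself, acting there by the `2 × 2` matrix
`[[1 + 1/r, -1/√r], [-1/√r, 1]]`, whose eigenvalues are the roots of `r μ² - (2r + 1) μ + r`.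
For each root `μ` the vectors `(√r (1 - μ) • v, v)` with `∑ v = 0` thus form an
`(r - 1)`-dimensional space of eigenvectors, and geometric multiplicity is at most algebraic
multiplicity. -/

open Matrix SimpleGraph Module

lemma deg_eq_card_add_card {V W : Type*} [Fintype V] [Fintype W] (G : SimpleGraph (V ⊕ W))
    (u : V ⊕ W) :
    deg G u = Nat.card {v // G.Adj u (.inl v)} + Nat.card {w // G.Adj u (.inr w)} := by
  rw [deg, ← Nat.card_sum]
  exact Nat.card_congr Equiv.subtypeSum

lemma adjMatrix_completeGraph_mulVec_of_sum_eq_zero {V : Type*} [Fintype V] [DecidableEq V]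
    {v : V → ℝ} (hv : ∑ i, v i = 0) : (completeGraph V).adjMatrix ℝ *ᵥ v = -v := by
  rw [adjMatrix_completeGraph_eq_of_one_sub_one, sub_mulVec, one_mulVec]
  ext i
  simp [mulVec, dotProduct, hv]

lemma LinearMap.finrank_sub_one_le_finrank_ker {K V : Type*} [Field K] [AddCommGroup V]
    [Module K V] [FiniteDimensional K V] (f : V →ₗ[K] K) :
    finrank K V - 1 ≤ finrank K (LinearMap.ker f) := by
  have hrank := f.finrank_range_add_finrank_ker
  have hrange := (LinearMap.range f).finrank_le
  rw [finrank_self] at hrange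
  omega

lemma Matrix.finrank_eigenspace_le_count_roots_charpoly {K n : Type*} [Field K] [Fintype n]
    [DecidableEq n] (A : Matrix n n K) (μ : K) :
    finrank K (End.eigenspace A.mulVecLin μ) ≤ A.charpoly.roots.count μ := by
  rw [Polynomial.count_roots, ← toLin'_apply', ← charpoly_toLin']
  exact LinearMap.finrank_eigenspace_le _ μ

lemma finrank_eigenspace_stdLap_le_count_spec {V : Type*} [Fintype V] (G : SimpleGraph V)
    (μ : ℝ) : finrank ℝ (End.eigenspace (stdLap G).mulVecLin μ) ≤ (spec G).count μ :=
  (stdLap G).finrank_eigenspace_le_count_roots_charpoly μ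

lemma mul_sq_sub_mul_add_eq_zero {r s : ℝ} (hs : s ^ 2 = 4 * r + 1) :
    r * ((2 * r + 1 + s) / (2 * r)) ^ 2 - (2 * r + 1) * ((2 * r + 1 + s) / (2 * r)) + r = 0 := by
  rcases eq_or_ne r 0 with rfl | hr
  · simp
  · field_simp
    linear_combination hs

section hatK

variable {r : ℕ}

@[simp] lemma hatK_adj_inl_inl (i j : Fin r) : (hatK r).Adj (.inl i) (.inl j) ↔ i ≠ j := Iff.rfl
@[simp] lemma hatK_adj_inl_inr (i j : Fin r) : (hatK r).Adj (.inl i) (.inr j) ↔ i = j := Iff.rfl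
@[simp] lemma hatK_adj_inr_inl (i j : Fin r) : (hatK r).Adj (.inr i) (.inl j) ↔ i = j := Iff.rfl
@[simp] lemma hatK_not_adj_inr_inr (i j : Fin r) : ¬(hatK r).Adj (.inr i) (.inr j) := id

@[simp] lemma hatK_deg_inl (i : Fin r) : deg (hatK r) (.inl i) = r := by
  rw [deg_eq_card_add_card]
  simpa [Nat.card_eq_fintype_card, Fintype.card_subtype_compl] using Nat.sub_add_cancel i.pos

@[simp] lemma hatK_deg_inr (i : Fin r) : deg (hatK r) (.inr i) = 1 := by
  rw [deg_eq_card_add_card]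
  simp [Nat.card_eq_fintype_card]

lemma stdLap_hatK :
    stdLap (hatK r) = fromBlocks (1 - (r : ℝ)⁻¹ • (completeGraph (Fin r)).adjMatrix ℝ)
      (-(√r)⁻¹ • 1) (-(√r)⁻¹ • 1) 1 := by
  ext (i | i) (j | j) <;> by_cases h : i = j <;> simp [stdLap, h, one_apply]

variable {μ : ℝ}

lemma stdLap_hatK_mulVec_eigenvector (hμ : r * μ ^ 2 - (2 * r + 1) * μ + r = 0)
    {v : Fin r → ℝ} (hv : ∑ i, v i = 0) :
    stdLap (hatK r) *ᵥ Sum.elim ((√r * (1 - μ)) • v) v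
      = μ • Sum.elim ((√r * (1 - μ)) • v) v := by
  rw [stdLap_hatK, fromBlocks_mulVec]
  simp only [Sum.elim_comp_inl, Sum.elim_comp_inr, sub_mulVec, one_mulVec, smul_mulVec,
    mulVec_smul, adjMatrix_completeGraph_mulVec_of_sum_eq_zero hv]
  have hsq : √(r : ℝ) ^ 2 = r := Real.sq_sqrt r.cast_nonneg
  ext (j | j) <;> have : (r : ℝ) ≠ 0 := by simpa using j.pos.ne'
  · simp
    field_simp
    rw [hsq]
    linear_combination (v j * r) * hμ
  · simp
    field_simp
    ring

lemma sub_one_le_finrank_eigenspace_stdLap_hatK (hμ : r * μ ^ 2 - (2 * r + 1) * μ + r = 0) :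
    r - 1 ≤ finrank ℝ (End.eigenspace (stdLap (hatK r)).mulVecLin μ) := by
  let total : (Fin r → ℝ) →ₗ[ℝ] ℝ := ∑ i, LinearMap.proj i
  let embed : (Fin r → ℝ) →ₗ[ℝ] (Fin r ⊕ Fin r → ℝ) :=
    { toFun v := Sum.elim ((√r * (1 - μ)) • v) v
      map_add' v w := by ext (j | j) <;> simp
      map_smul' a v := by ext (j | j) <;> simp; ring }
  have hinj : Function.Injective embed := fun v w h => funext fun j => congrFun h (.inr j)
  have hmaps : (LinearMap.ker total).map embed ≤ End.eigenspace (stdLap (hatK r)).mulVecLin μ := by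
    rintro _ ⟨v, hv, rfl⟩
    exact End.mem_eigenspace_iff.2 (stdLap_hatK_mulVec_eigenvector hμ (by simpa [total] using hv))
  calc r - 1 ≤ finrank ℝ (LinearMap.ker total) := by
        simpa using total.finrank_sub_one_le_finrank_ker
    _ = finrank ℝ ((LinearMap.ker total).map embed) :=
        (Submodule.equivMapOfInjective embed hinj _).finrank_eq
    _ ≤ _ := Submodule.finrank_mono hmaps

end hatK

theorem stmt_6_general (r : ℕ) :
    r - 1 ≤ (spec (hatK r)).count
        ((2 * (r : ℝ) + 1 - Real.sqrt (4 * (r : ℝ) + 1)) / (2 * (r : ℝ))) ∧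
    r - 1 ≤ (spec (hatK r)).count
        ((2 * (r : ℝ) + 1 + Real.sqrt (4 * (r : ℝ) + 1)) / (2 * (r : ℝ))) := by
  have key (s : ℝ) (hs : s ^ 2 = 4 * r + 1) :
      r - 1 ≤ (spec (hatK r)).count ((2 * r + 1 + s) / (2 * r)) :=
    (sub_one_le_finrank_eigenspace_stdLap_hatK (mul_sq_sub_mul_add_eq_zero hs)).trans
      (finrank_eigenspace_stdLap_le_count_spec _ _)
  have hsq : √(4 * (r : ℝ) + 1) ^ 2 = 4 * r + 1 := Real.sq_sqrt (by positivity)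
  exact ⟨by simpa [sub_eq_add_neg] using key _ ((neg_sq _).trans hsq), key _ hsq⟩

/-- the numbers `(2r+1∓√(4r+1))/(2r)` are eigenvalues of the
standard Laplacian of `K̂_r`, each with multiplicity at least `r-1`. -/
theorem stmt_6 (r : ℕ) (hr : 2 ≤ r) :
    r - 1 ≤ (spec (hatK r)).count
        ((2 * (r : ℝ) + 1 - Real.sqrt (4 * (r : ℝ) + 1)) / (2 * (r : ℝ))) ∧
    r - 1 ≤ (spec (hatK r)).count
        ((2 * (r : ℝ) + 1 + Real.sqrt (4 * (r : ℝ) + 1)) / (2 * (r : ℝ))) :=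
  stmt_6_general r
end

section
/- Let A = (a_1,…,a_s) and B = (b_1,…,b_s) be two s-partitions of r ∈ ℕ (with s ≥ 2). Then the fuzzy ball graphs K̂_r(A) and K̂_r(B) are isospectral for the standard Laplacian: the multisets of eigenvalues of Δ_{K̂_r(A)} and Δ_{K̂_r(B)} coincide. -/
open scoped Classical

/-- The fuzzy ball `K̂_r(A)`: vertices `.inl i` (`i : Fin r`) form a complete
graph, and the vertex `.inr j` (`j : Fin s`) is adjacent exactly to the `A j`
vertices `.inl i` with `a_1 + ⋯ + a_{j-1} ≤ i < a_1 + ⋯ + a_j` (0-based). -/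
def fuzzyBall (r s : ℕ) (A : Fin s → ℕ) : SimpleGraph (Fin r ⊕ Fin s) where
  Adj x y :=
    match x, y with
    | .inl i, .inl j => i ≠ j
    | .inl i, .inr j =>
        (∑ k ∈ Finset.Iio j, A k) ≤ (i : ℕ) ∧ (i : ℕ) < ∑ k ∈ Finset.Iic j, A k
    | .inr j, .inl i =>
        (∑ k ∈ Finset.Iio j, A k) ≤ (i : ℕ) ∧ (i : ℕ) < ∑ k ∈ Finset.Iic j, A k
    | .inr _, .inr _ => False
  symm := by
    constructor
    rintro (i | i) (j | j) h
    · exact h.symm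
    · exact h
    · exact h
    · exact h
  loopless := by
    constructor
    rintro (i | i) h
    · exact h rfl
    · exact h

/-! The standard Laplacian of `K̂_r(A)` is `1 - M_A` with
`M_A = [[(J - 1) / r, E_A / √r], [E_Aᵀ / √r, 0]]`, where `J` is the all-ones matrix and `E_A` is
the incidence matrix of the partition of the clique into blocks, its `j`-th column scaled by
`1 / √a_j`. The columns of `E_A` are orthonormal and `E_A (√a_j)_j = 𝟙`. Extending orthonormal
families to orthonormal bases gives an orthogonal `U` with `U (√a_j)_j = (√b_j)_j` and then an
orthogonal `O` with `O E_A = E_B U`. Then `O 𝟙 = E_B U (√a_j)_j = 𝟙`, so `O` commutes with `J`,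
and the orthogonal matrix `diag(O, U)` conjugates `M_A` into `M_B`. -/

open Finset

namespace Matrix

variable {m n : Type*} [Fintype m] [DecidableEq m] [Fintype n] [DecidableEq n]

omit [DecidableEq m] [Fintype n] in
theorem orthonormal_toLp_col_iff (X : Matrix m n ℝ) :
    Orthonormal ℝ (fun j => WithLp.toLp 2 (Xᵀ j)) ↔ Xᵀ * X = 1 := by
  simp only [orthonormal_iff_ite, EuclideanSpace.inner_toLp_toLp, ← Matrix.ext_iff, mul_apply,
    one_apply, dotProduct, star_trivial, transpose_apply, mul_comm]

omit [DecidableEq m] in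
theorem card_le_of_transpose_mul_self_eq_one {X : Matrix m n ℝ} (hX : Xᵀ * X = 1) :
    Fintype.card n ≤ Fintype.card m := by
  simpa using ((orthonormal_toLp_col_iff X).2 hX).linearIndependent.fintype_card_le_finrank

omit [Fintype n] in
theorem exists_mem_orthogonalGroup_submatrix_eq {X : Matrix m n ℝ} (hX : Xᵀ * X = 1)
    (e : n ↪ m) : ∃ Q ∈ orthogonalGroup m ℝ, Q.submatrix id e = X := by
  have hcols : Orthonormal ℝ ((Set.range e).domRestrict
      (Function.extend e (fun j => WithLp.toLp 2 (Xᵀ j)) 0)) := by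
    convert ((orthonormal_toLp_col_iff X).2 hX).comp _
      (Equiv.ofInjective e e.injective).symm.injective
    funext ⟨_, j, rfl⟩
    simp [e.injective.extend_apply]
  obtain ⟨b, hb⟩ := hcols.exists_orthonormalBasis_extension_of_card_eq (by simp)
  refine ⟨(EuclideanSpace.basisFun m ℝ).toBasis.toMatrix b,
    (EuclideanSpace.basisFun m ℝ).toMatrix_orthonormalBasis_mem_orthogonal b, ?_⟩
  ext i j
  simp [Module.Basis.toMatrix_apply, hb (e j) ⟨j, rfl⟩, e.injective.extend_apply]

theorem exists_mem_orthogonalGroup_mul_eq {X Y : Matrix m n ℝ} (hX : Xᵀ * X = 1)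
    (hY : Yᵀ * Y = 1) : ∃ O ∈ orthogonalGroup m ℝ, O * X = Y := by
  obtain ⟨e⟩ := Function.Embedding.nonempty_of_card_le (card_le_of_transpose_mul_self_eq_one hX)
  obtain ⟨P, hP, rfl⟩ := exists_mem_orthogonalGroup_submatrix_eq hX e
  obtain ⟨Q, hQ, rfl⟩ := exists_mem_orthogonalGroup_submatrix_eq hY e
  have hPt : Pᵀ ∈ orthogonalGroup m ℝ := by
    rw [mem_orthogonalGroup_iff, transpose_transpose, ← mem_orthogonalGroup_iff']
    exact hP
  refine ⟨Q * Pᵀ, mul_mem hQ hPt, ?_⟩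
  change (Q * Pᵀ * P).submatrix id e = _
  rw [Matrix.mul_assoc, (mem_orthogonalGroup_iff' _ _).1 hP, Matrix.mul_one]

omit [DecidableEq n] in
theorem exists_mem_orthogonalGroup_mulVec_eq {v w : m → ℝ} (h : v ⬝ᵥ v = w ⬝ᵥ w) :
    ∃ U ∈ orthogonalGroup m ℝ, U *ᵥ v = w := by
  by_cases hv : v ⬝ᵥ v = 0
  · obtain rfl := dotProduct_self_eq_zero.1 hv
    obtain rfl := dotProduct_self_eq_zero.1 (h ▸ hv)
    exact ⟨1, one_mem _, mulVec_zero _⟩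
  set c := √(v ⬝ᵥ v)
  have hc2 : c ^ 2 = v ⬝ᵥ v := Real.sq_sqrt (dotProduct_self_star_nonneg v)
  have hc : c ≠ 0 := fun h0 => hv (by rw [← hc2, h0, sq, mul_zero])
  have hunit : ∀ u : m → ℝ, u ⬝ᵥ u = v ⬝ᵥ v →
      (replicateCol Unit (c⁻¹ • u))ᵀ * replicateCol Unit (c⁻¹ • u) = 1 := by
    intro u hu
    ext
    rw [transpose_replicateCol, replicateRow_mul_replicateCol_apply, one_apply_eq,
      dotProduct_smul, smul_dotProduct, hu, smul_eq_mul, smul_eq_mul, ← mul_assoc, ← mul_inv,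
      ← sq, hc2, inv_mul_cancel₀ hv]
  obtain ⟨U, hU, hUvw⟩ := exists_mem_orthogonalGroup_mul_eq (hunit v rfl) (hunit w h.symm)
  refine ⟨U, hU, ?_⟩
  rw [← replicateCol_mulVec, replicateCol_inj, mulVec_smul] at hUvw
  exact smul_right_injective _ (inv_ne_zero hc) hUvw

omit [DecidableEq m] in
theorem dotProduct_mulVec_self_of_transpose_mul_self_eq_one {X : Matrix m n ℝ}
    (hX : Xᵀ * X = 1) (v : n → ℝ) : X *ᵥ v ⬝ᵥ X *ᵥ v = v ⬝ᵥ v := by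
  rw [dotProduct_mulVec, ← mulVec_transpose, mulVec_mulVec, hX, one_mulVec, dotProduct_comm]

theorem charpoly_mul_mul_transpose_of_mem_orthogonalGroup {P : Matrix m m ℝ}
    (hP : P ∈ orthogonalGroup m ℝ) (M : Matrix m m ℝ) : (P * M * Pᵀ).charpoly = M.charpoly := by
  rw [charpoly_mul_comm, ← Matrix.mul_assoc, (mem_orthogonalGroup_iff' _ _).1 hP, Matrix.one_mul]

theorem fromBlocks_mem_orthogonalGroup {O : Matrix m m ℝ} {U : Matrix n n ℝ}
    (hO : O ∈ orthogonalGroup m ℝ) (hU : U ∈ orthogonalGroup n ℝ) :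
    fromBlocks O 0 0 U ∈ orthogonalGroup (m ⊕ n) ℝ := by
  rw [mem_orthogonalGroup_iff] at *
  simp [fromBlocks_transpose, fromBlocks_multiply, hO, hU]

variable (m) in
noncomputable def fuzzyBallAdj (E : Matrix m n ℝ) : Matrix (m ⊕ n) (m ⊕ n) ℝ :=
  fromBlocks ((Fintype.card m : ℝ)⁻¹ • (vecMulVec 1 1 - 1)) ((√(Fintype.card m))⁻¹ • E)
    ((√(Fintype.card m))⁻¹ • Eᵀ) 0

theorem fromBlocks_mul_fuzzyBallAdj_mul_transpose {O : Matrix m m ℝ} {U : Matrix n n ℝ}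
    (hO : O ∈ orthogonalGroup m ℝ) (hU : U ∈ orthogonalGroup n ℝ) (hO1 : O *ᵥ 1 = 1)
    {E F : Matrix m n ℝ} (hOE : O * E = F * U) :
    fromBlocks O 0 0 U * fuzzyBallAdj m E * (fromBlocks O 0 0 U)ᵀ = fuzzyBallAdj m F := by
  rw [mem_orthogonalGroup_iff] at hO hU
  have hJ : O * (vecMulVec 1 1 - 1) * Oᵀ = vecMulVec 1 1 - 1 := by
    rw [Matrix.mul_sub, Matrix.sub_mul, mul_vecMulVec, hO1, vecMulVec_mul, vecMul_transpose, hO1,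
      Matrix.mul_one, hO]
  have hF : O * E * Uᵀ = F := by rw [hOE, Matrix.mul_assoc, hU, Matrix.mul_one]
  have hFt : U * Eᵀ * Oᵀ = Fᵀ := by
    rw [← transpose_transpose U, ← transpose_mul, ← transpose_mul, ← Matrix.mul_assoc, hF]
  simp only [fuzzyBallAdj, fromBlocks_transpose, fromBlocks_multiply, Matrix.mul_zero,
    Matrix.zero_mul, add_zero, zero_add, Matrix.mul_smul, Matrix.smul_mul, transpose_zero,
    smul_zero, hJ, hF, hFt]

theorem charpoly_one_sub_fuzzyBallAdj_eq {E F : Matrix m n ℝ} (hE : Eᵀ * E = 1)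
    (hF : Fᵀ * F = 1) {v w : n → ℝ} (hEv : E *ᵥ v = 1) (hFw : F *ᵥ w = 1) :
    (1 - fuzzyBallAdj m E).charpoly = (1 - fuzzyBallAdj m F).charpoly := by
  have hvw : v ⬝ᵥ v = w ⬝ᵥ w := by
    rw [← dotProduct_mulVec_self_of_transpose_mul_self_eq_one hE,
      ← dotProduct_mulVec_self_of_transpose_mul_self_eq_one hF, hEv, hFw]
  obtain ⟨U, hU, hUv⟩ := exists_mem_orthogonalGroup_mulVec_eq hvw
  have hFU : (F * U)ᵀ * (F * U) = 1 := by
    rw [transpose_mul, Matrix.mul_assoc, ← Matrix.mul_assoc Fᵀ, hF, Matrix.one_mul,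
      (mem_orthogonalGroup_iff' _ _).1 hU]
  obtain ⟨O, hO, hOE⟩ := exists_mem_orthogonalGroup_mul_eq hE hFU
  have hO1 : O *ᵥ 1 = 1 :=
    calc O *ᵥ 1 = (O * E) *ᵥ v := by rw [← mulVec_mulVec, hEv]
      _ = 1 := by rw [hOE, ← mulVec_mulVec, hUv, hFw]
  have hP := fromBlocks_mem_orthogonalGroup hO hU
  rw [← fromBlocks_mul_fuzzyBallAdj_mul_transpose hO hU hO1 hOE,
    ← charpoly_mul_mul_transpose_of_mem_orthogonalGroup hP, Matrix.mul_sub, Matrix.sub_mul,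
    Matrix.mul_one, (mem_orthogonalGroup_iff _ _).1 hP]

end Matrix

section Blocks

variable {r s : ℕ} (A : Fin s → ℕ)

def blockStart (j : Fin s) : ℕ := ∑ k ∈ Iio j, A k

def block (j : Fin s) : Finset ℕ := Ico (blockStart A j) (blockStart A j + A j)

theorem sum_Iic_eq_blockStart_add (j : Fin s) : ∑ k ∈ Iic j, A k = blockStart A j + A j := by
  rw [Iic_eq_cons_Iio, sum_cons, add_comm, blockStart]

theorem block_subset_range (hAr : ∑ j, A j = r) (j : Fin s) : block A j ⊆ range r := by
  intro i hi
  have : ∑ k ∈ Iic j, A k ≤ r := hAr ▸ sum_le_sum_of_subset (subset_univ _)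
  rw [sum_Iic_eq_blockStart_add] at this
  rw [block, mem_Ico] at hi
  exact mem_range.2 (by omega)

theorem pairwise_disjoint_block : Pairwise (Function.onFun Disjoint (block A)) := by
  refine (pairwise_disjoint_on _).2 fun j j' hjj' => disjoint_left.2 fun i hi hi' => ?_
  have : blockStart A j + A j ≤ blockStart A j' := by
    rw [← sum_Iic_eq_blockStart_add]
    exact sum_le_sum_of_subset fun k hk => mem_Iio.2 ((mem_Iic.1 hk).trans_lt hjj')
  rw [block, mem_Ico] at hi hi'
  omega

theorem biUnion_block (hAr : ∑ j, A j = r) : univ.biUnion (block A) = range r := by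
  refine eq_of_subset_of_card_le (biUnion_subset.2 fun j _ => block_subset_range A hAr j) ?_
  rw [card_biUnion ((pairwise_disjoint_block A).set_pairwise _), card_range, ← hAr]
  simp [block]

theorem existsUnique_mem_block (hAr : ∑ j, A j = r) {i : ℕ} (hi : i < r) :
    ∃! j, i ∈ block A j := by
  obtain ⟨j, -, hj⟩ := mem_biUnion.1 ((biUnion_block A hAr).symm ▸ mem_range.2 hi)
  exact ⟨j, hj, fun j' hj' => by_contra fun hne =>
    disjoint_left.1 (pairwise_disjoint_block A hne) hj' hj⟩

theorem card_filter_val_mem_block (hAr : ∑ j, A j = r) (j : Fin s) :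
    #{i : Fin r | (i : ℕ) ∈ block A j} = A j := by
  rw [card_filter, Fin.sum_univ_eq_sum_range (fun i => if i ∈ block A j then 1 else 0),
    sum_ite_mem, inter_eq_right.2 (block_subset_range A hAr j), ← card_eq_sum_ones]
  simp [block]

end Blocks

section FuzzyBall

variable {r s : ℕ} {A : Fin s → ℕ}

@[simp] theorem fuzzyBall_adj_inl_inl {i k : Fin r} :
    (fuzzyBall r s A).Adj (.inl i) (.inl k) ↔ i ≠ k := Iff.rfl

@[simp] theorem fuzzyBall_adj_inl_inr {i : Fin r} {j : Fin s} :
    (fuzzyBall r s A).Adj (.inl i) (.inr j) ↔ (i : ℕ) ∈ block A j := by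
  simp [fuzzyBall, block, sum_Iic_eq_blockStart_add, blockStart]

@[simp] theorem fuzzyBall_adj_inr_inl {i : Fin r} {j : Fin s} :
    (fuzzyBall r s A).Adj (.inr j) (.inl i) ↔ (i : ℕ) ∈ block A j :=
  (fuzzyBall r s A).adj_comm _ _ |>.trans fuzzyBall_adj_inl_inr

@[simp] theorem fuzzyBall_not_adj_inr_inr {j j' : Fin s} :
    ¬ (fuzzyBall r s A).Adj (.inr j) (.inr j') := id

theorem deg_eq_sum_ite {V : Type*} [Fintype V] (G : SimpleGraph V) (u : V) :
    deg G u = ∑ v, if G.Adj u v then 1 else 0 := by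
  rw [deg, Nat.card_eq_fintype_card, Fintype.card_subtype, card_filter]
  rfl

theorem deg_fuzzyBall_inl (hAr : ∑ j, A j = r) (i : Fin r) :
    deg (fuzzyBall r s A) (.inl i) = r := by
  obtain ⟨j, hj, hj_unique⟩ := existsUnique_mem_block A hAr i.isLt
  rw [deg_eq_sum_ite, Fintype.sum_sum_type]
  simp only [fuzzyBall_adj_inl_inl, fuzzyBall_adj_inl_inr]
  have hblocks : #{j' | (i : ℕ) ∈ block A j'} = 1 :=
    card_eq_one.2 ⟨j, eq_singleton_iff_unique_mem.2
      ⟨by simpa using hj, fun j' hj' => hj_unique j' (by simpa using hj')⟩⟩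
  rw [← card_filter, ← card_filter, filter_ne, card_erase_of_mem (mem_univ _), hblocks, card_univ,
    Fintype.card_fin]
  have := i.isLt
  omega

theorem deg_fuzzyBall_inr (hAr : ∑ j, A j = r) (j : Fin s) :
    deg (fuzzyBall r s A) (.inr j) = A j := by
  rw [deg_eq_sum_ite, Fintype.sum_sum_type]
  simp only [fuzzyBall_adj_inr_inl, fuzzyBall_not_adj_inr_inr, if_false, sum_const_zero, add_zero,
    ← card_filter, card_filter_val_mem_block A hAr]

end FuzzyBall

section Incidence

variable {r s : ℕ} {A : Fin s → ℕ}

open Matrix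

variable (r A) in
noncomputable def blockIncidence : Matrix (Fin r) (Fin s) ℝ :=
  of fun i j => if (i : ℕ) ∈ block A j then (√(A j : ℝ))⁻¹ else 0

theorem blockIncidence_transpose_mul_self (hA1 : ∀ j, 1 ≤ A j) (hAr : ∑ j, A j = r) :
    (blockIncidence r A)ᵀ * blockIncidence r A = 1 := by
  ext j l
  simp only [mul_apply, transpose_apply, blockIncidence, of_apply, ite_zero_mul_ite_zero]
  by_cases hjl : j = l
  · subst hjl
    have hA : (A j : ℝ) ≠ 0 := by have := hA1 j; positivity
    simp only [one_apply_eq, and_self]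
    rw [← sum_filter, sum_const, card_filter_val_mem_block A hAr, nsmul_eq_mul, ← mul_inv,
      Real.mul_self_sqrt (Nat.cast_nonneg _), mul_inv_cancel₀ hA]
  · rw [one_apply_ne hjl]
    exact sum_eq_zero fun i _ =>
      if_neg fun h => disjoint_left.1 (pairwise_disjoint_block A hjl) h.1 h.2

theorem blockIncidence_mulVec_sqrt (hAr : ∑ j, A j = r) :
    blockIncidence r A *ᵥ (fun j => √(A j : ℝ)) = 1 := by
  funext i
  obtain ⟨j, hj, hj_unique⟩ := existsUnique_mem_block A hAr i.isLt
  have hA : √(A j : ℝ) ≠ 0 := by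
    rw [block, mem_Ico] at hj
    exact Real.sqrt_ne_zero'.2 (by exact_mod_cast (show 0 < A j by omega))
  simp only [mulVec, dotProduct, blockIncidence, of_apply, Pi.one_apply]
  rw [sum_eq_single j (fun j' _ hne => by rw [if_neg (mt (hj_unique j') hne), zero_mul])
    (by simp), if_pos hj, inv_mul_cancel₀ hA]

theorem stdLap_fuzzyBall (hAr : ∑ j, A j = r) :
    stdLap (fuzzyBall r s A) = 1 - fuzzyBallAdj (Fin r) (blockIncidence r A) := by
  ext (i | j) (k | l) <;>
    simp [stdLap, fuzzyBallAdj, deg_fuzzyBall_inl hAr, deg_fuzzyBall_inr hAr, blockIncidence,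
      one_apply] <;>
    split_ifs <;> ring

end Incidence

theorem stmt_8_general (r s : ℕ) (A B : Fin s → ℕ)
    (hA1 : ∀ j, 1 ≤ A j) (hB1 : ∀ j, 1 ≤ B j)
    (hAr : ∑ j, A j = r) (hBr : ∑ j, B j = r) :
    spec (fuzzyBall r s A) = spec (fuzzyBall r s B) := by
  have h := Matrix.charpoly_one_sub_fuzzyBallAdj_eq
    (blockIncidence_transpose_mul_self hA1 hAr) (blockIncidence_transpose_mul_self hB1 hBr)
    (blockIncidence_mulVec_sqrt hAr) (blockIncidence_mulVec_sqrt hBr)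
  rw [← stdLap_fuzzyBall hAr, ← stdLap_fuzzyBall hBr] at h
  unfold spec
  -- `spec` takes `charpoly` with the classical `DecidableEq` instance on the vertex type.
  convert congrArg Polynomial.roots h

/-- "fuzzy ball theorem", standard Laplacian part:
fuzzy balls over two `s`-partitions of `r` are isospectral. -/
theorem stmt_8 (r s : ℕ) (hs : 2 ≤ s) (A B : Fin s → ℕ)
    (hA1 : ∀ j, 1 ≤ A j) (hB1 : ∀ j, 1 ≤ B j)
    (hAr : ∑ j, A j = r) (hBr : ∑ j, B j = r) :
    spec (fuzzyBall r s A) = spec (fuzzyBall r s B) :=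
  stmt_8_general r s A B hA1 hB1 hAr hBr
end

section
/- Let A = (a_1,…,a_s) and B = (b_1,…,b_s) be two s-partitions of r ∈ ℕ with s ≥ 2 that are different as multisets, i.e. the multiset {a_1,…,a_s} differs from the multiset {b_1,…,b_s}. Then the fuzzy ball graphs K̂_r(A) and K̂_r(B) are not isomorphic as simple graphs. -/
/-!
The degrees of `K̂_r(A)` are `r` at every clique vertex `u_i` (its `r - 1` clique neighbours and
the one `w_j` whose block contains `i`) and `a_j` at `w_j`. So the degree multiset is `r` copies
of `r` together with `{a_1, …, a_s}`; it is an isomorphism invariant, hence isomorphic fuzzy balls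
have the same partition multiset.
-/

open scoped Classical

open Finset

theorem SimpleGraph.Iso.map_degree_univ {V W : Type*} [Fintype V] [Fintype W]
    {G : SimpleGraph V} {H : SimpleGraph W} [DecidableRel G.Adj] [DecidableRel H.Adj]
    (f : G ≃g H) : univ.val.map (fun v => G.degree v) = univ.val.map (fun w => H.degree w) := by
  rw [← Multiset.map_univ_val_equiv f.toEquiv, Multiset.map_map]
  exact Multiset.map_congr rfl fun v _ => (f.degree_eq v).symm

theorem Fin.sum_castLE_eq_sum_Iio {M : Type*} [AddCommMonoid M] {s : ℕ} (A : Fin s → M)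
    (j : Fin s) : ∑ i : Fin j, A (Fin.castLE j.2.le i) = ∑ k ∈ Iio j, A k :=
  sum_bij' (fun i _ => Fin.castLE j.2.le i) (fun k hk => ⟨k, Fin.lt_def.1 (mem_Iio.1 hk)⟩)
    (by simp [Fin.lt_def]) (by simp) (by simp) (by simp) (by simp)

theorem SimpleGraph.degree_eq_card_inl_add_card_inr {α β : Type*} [Fintype α] [Fintype β]
    (G : SimpleGraph (α ⊕ β)) [DecidableRel G.Adj] (v : α ⊕ β) :
    G.degree v = #{a | G.Adj v (.inl a)} + #{b | G.Adj v (.inr b)} := by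
  have := G.degree_eq_sum_if_adj (R := ℕ) v
  rw [Nat.cast_id, Fintype.sum_sum_type] at this
  simp only [this, sum_boole, Nat.cast_id]

namespace fuzzyBall

variable {r s : ℕ} {A : Fin s → ℕ}

def blockEquiv (hA : ∑ j, A j = r) : (Σ j, Fin (A j)) ≃ Fin r :=
  finSigmaFinEquiv.trans (finCongr hA)

theorem blockEquiv_val (hA : ∑ j, A j = r) (x : Σ j, Fin (A j)) :
    (blockEquiv hA x : ℕ) = ∑ k ∈ Iio x.1, A k + x.2 := by
  simp [blockEquiv, Fin.sum_castLE_eq_sum_Iio]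

@[simp]
theorem adj_inl_inl_iff (i i' : Fin r) : (fuzzyBall r s A).Adj (.inl i) (.inl i') ↔ i ≠ i' :=
  Iff.rfl

@[simp]
theorem not_adj_inr_inr (j j' : Fin s) : ¬(fuzzyBall r s A).Adj (.inr j) (.inr j') :=
  id

theorem adj_inl_inr_iff (hA : ∑ j, A j = r) (i : Fin r) (j : Fin s) :
    (fuzzyBall r s A).Adj (.inl i) (.inr j) ↔ ((blockEquiv hA).symm i).1 = j := by
  have hIic : ∑ k ∈ Iic j, A k = ∑ k ∈ Iio j, A k + A j := by
    rw [Iic_eq_cons_Iio, sum_cons, add_comm]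
  change ∑ k ∈ Iio j, A k ≤ i ∧ (i : ℕ) < ∑ k ∈ Iic j, A k ↔ _
  rw [hIic]
  constructor
  · rintro ⟨hlo, hhi⟩
    have hblock : blockEquiv hA ⟨j, ⟨i - ∑ k ∈ Iio j, A k, by omega⟩⟩ = i := by
      ext
      rw [blockEquiv_val]
      dsimp only
      omega
    rw [← hblock, Equiv.symm_apply_apply]
  · rintro rfl
    have hi := blockEquiv_val hA ((blockEquiv hA).symm i)
    rw [Equiv.apply_symm_apply] at hi
    have hk := ((blockEquiv hA).symm i).2.isLt
    omega

theorem degree_inr (hA : ∑ j, A j = r) (j : Fin s) :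
    (fuzzyBall r s A).degree (.inr j) = A j := by
  rw [SimpleGraph.degree_eq_card_inl_add_card_inr]
  simp only [SimpleGraph.adj_comm _ (Sum.inr j), adj_inl_inr_iff hA, not_adj_inr_inr, filter_false,
    card_empty, add_zero]
  calc #{i | ((blockEquiv hA).symm i).1 = j}
      _ = #{x : Σ j, Fin (A j) | x.1 = j} := card_equiv (blockEquiv hA).symm (by simp)
      _ = A j := by
        rw [card_filter, Fintype.sum_sigma]
        simp [apply_ite card]

theorem degree_inl (hA : ∑ j, A j = r) (i : Fin r) :
    (fuzzyBall r s A).degree (.inl i) = r := by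
  rw [SimpleGraph.degree_eq_card_inl_add_card_inr]
  simp [adj_inl_inr_iff hA, filter_ne, filter_eq]
  have hr := i.pos
  omega

theorem map_degree_univ (hA : ∑ j, A j = r) :
    univ.val.map (fun v => (fuzzyBall r s A).degree v) = .replicate r r + univ.val.map A := by
  rw [← univ_disjSum_univ, val_disjSum, Multiset.disjSum, Multiset.map_add, Multiset.map_map,
    Multiset.map_map]
  simp [degree_inl hA, degree_inr hA]

end fuzzyBall

theorem stmt_10_general (r s : ℕ) (A B : Fin s → ℕ)
    (hAr : ∑ j, A j = r) (hBr : ∑ j, B j = r)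
    (hAB : (Finset.univ.val.map A : Multiset ℕ) ≠ Finset.univ.val.map B) :
    IsEmpty (fuzzyBall r s A ≃g fuzzyBall r s B) := by
  refine ⟨fun f => hAB ?_⟩
  have hdeg := f.map_degree_univ
  rw [fuzzyBall.map_degree_univ hAr, fuzzyBall.map_degree_univ hBr] at hdeg
  exact add_left_cancel hdeg

/-- fuzzy balls over two `s`-partitions of `r` which differ as
multisets are not isomorphic. -/
theorem stmt_10 (r s : ℕ) (hs : 2 ≤ s) (A B : Fin s → ℕ)
    (hA1 : ∀ j, 1 ≤ A j) (hB1 : ∀ j, 1 ≤ B j)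
    (hAr : ∑ j, A j = r) (hBr : ∑ j, B j = r)
    (hAB : (Finset.univ.val.map A : Multiset ℕ) ≠ Finset.univ.val.map B) :
    IsEmpty (fuzzyBall r s A ≃g fuzzyBall r s B) :=
  stmt_10_general r s A B hAr hBr hAB
end

section
/- Let S(K_6) be the subdivision graph of the complete graph K_6 (a graph on 6 + 15 = 21 vertices). Then the multiset of the 21 eigenvalues of the standard Laplacian of S(K_6) is exactly: 0 once, 1 − √(2/5) with multiplicity 5, 1 with multiplicity 9, 1 + √(2/5) with multiplicity 5, and 2 once. -/
open scoped Classical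

/-- The subdivision graph `S(G)`: vertex set `V(G) ⊔ E(G)`, with `v : V(G)`
adjacent to `e : E(G)` iff `v` is an endpoint of `e`. -/
def subdiv {V : Type*} (G : SimpleGraph V) : SimpleGraph (V ⊕ G.edgeSet) where
  Adj x y :=
    match x, y with
    | .inl v, .inr e => v ∈ (e : Sym2 V)
    | .inr e, .inl v => v ∈ (e : Sym2 V)
    | _, _ => False
  symm := ⟨by rintro (v | e) (w | f) h <;> exact h⟩
  loopless := ⟨by rintro (v | e) h <;> exact h⟩

/-! For a `k`-regular graph `G` with vertex–edge incidence matrix `B`, every edge of `S(G)` joins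
a vertex of degree `k` to one of degree `2`, so `Δ_{S(G)} = 1 - (2k)^{-1/2} [[0, B], [Bᵀ, 0]]`.
For a bipartite block matrix `A = [[0, M], [N, 0]]` one has `X ^ |V| χ_A = X ^ |E| χ_{MN}(X²)`,
which reduces everything to the `|V| × |V|` matrix `B Bᵀ / 2k`. For `K_6`, `B Bᵀ = 4 I + J` has
eigenvalues `10` (once) and `4` (five times), so `Δ - 1` has eigenvalues `±1`, `±√(2/5)` (five
times each) and `0` with multiplicity `15 - 6 = 9`. -/

open Matrix Polynomial

namespace Matrix

variable {R : Type*} [CommRing R] {m n : Type*} [Fintype m] [Fintype n] [DecidableEq m]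
  [DecidableEq n]

theorem charpoly_comp_X_sq (A : Matrix m m R) :
    A.charpoly.comp (X ^ 2) = (scalar m (X ^ 2 : R[X]) - A.map C).det := by
  rw [charpoly, ← coe_compRingHom_apply, RingHom.map_det]
  congr 1
  ext i j
  rcases eq_or_ne i j with rfl | hij <;> simp [charmatrix_apply_ne, *]

theorem charpoly_fromBlocks_zero₁₁_zero₂₂ (M : Matrix m n R) (N : Matrix n m R) :
    X ^ Fintype.card m * (fromBlocks 0 M N 0).charpoly =
      X ^ Fintype.card n * (M * N).charpoly.comp (X ^ 2) := by
  set P : Matrix (m ⊕ n) (m ⊕ n) R[X] := fromBlocks (scalar m X) 0 (N.map C) (scalar n X)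
  have hprod : charmatrix (fromBlocks 0 M N 0) * P =
      fromBlocks (scalar m (X ^ 2) - (M * N).map C) (-(X : R[X]) • M.map C) 0
        (scalar n (X ^ 2)) := by
    simp [P, charmatrix_fromBlocks, fromBlocks_multiply, pow_two, Matrix.map_mul,
      ← smul_eq_mul_diagonal, ← smul_eq_diagonal_mul, sub_eq_add_neg, -diagonal_neg,
      ← diagonal_smul]
  have hdet := congrArg det hprod
  simp only [det_mul, P, det_fromBlocks_zero₁₂, det_fromBlocks_zero₂₁, scalar_apply,
    det_diagonal, Finset.prod_const, Finset.card_univ] at hdet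
  apply (isRegular_X_pow (R := R) (Fintype.card n)).left
  rw [charpoly_comp_X_sq, charpoly, scalar_apply]
  linear_combination hdet

theorem charpoly_scalar_add_vecMulVec (a : R) (u v : n → R) :
    (scalar n a + vecMulVec u v).charpoly =
      (X - C a) ^ Fintype.card n - C (u ⬝ᵥ v) * (X - C a) ^ (Fintype.card n - 1) := by
  have h := charpoly_sub_scalar (vecMulVec u v) (-a)
  rw [map_neg, sub_neg_eq_add, add_comm, charpoly_vecMulVec] at h
  rw [h]
  simp [smul_eq_C_mul, sub_eq_add_neg]

end Matrix

namespace SimpleGraph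

theorem stdLap_eq_one_sub_smul_adjMatrix {W : Type*} [Fintype W] [DecidableEq W]
    (H : SimpleGraph W) [DecidableRel H.Adj] {d : ℝ}
    (hd : ∀ u v, H.Adj u v → (deg H u : ℝ) * deg H v = d) :
    stdLap H = 1 - (√d)⁻¹ • H.adjMatrix ℝ := by
  ext u v
  rcases eq_or_ne u v with rfl | huv
  · simp [stdLap]
  · by_cases h : H.Adj u v <;> simp [stdLap, huv, h, hd]

variable {V : Type*} (G : SimpleGraph V)

@[simp] theorem subdiv_adj_inl_inr {v : V} {e : G.edgeSet} :
    (subdiv G).Adj (.inl v) (.inr e) ↔ v ∈ (e : Sym2 V) := Iff.rfl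

@[simp] theorem subdiv_adj_inr_inl {v : V} {e : G.edgeSet} :
    (subdiv G).Adj (.inr e) (.inl v) ↔ v ∈ (e : Sym2 V) := Iff.rfl

@[simp] theorem not_subdiv_adj_inl_inl {v w : V} : ¬(subdiv G).Adj (.inl v) (.inl w) := id

@[simp] theorem not_subdiv_adj_inr_inr {e f : G.edgeSet} : ¬(subdiv G).Adj (.inr e) (.inr f) :=
  id

section Degree

variable [Fintype V] [Fintype G.edgeSet]

theorem deg_subdiv_inl (v : V) [Fintype (G.neighborSet v)] :
    deg (subdiv G) (.inl v) = G.degree v := by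
  have hadj : {x | (subdiv G).Adj (.inl v) x} =
      Sum.inr '' {e : G.edgeSet | v ∈ (e : Sym2 V)} := by
    ext (w | e) <;> simp
  rw [deg, hadj, Nat.card_image_of_injective Sum.inr_injective, ← card_neighborSet_eq_degree,
    ← Nat.card_eq_fintype_card]
  exact Nat.card_congr
    ((Equiv.subtypeSubtypeEquivSubtypeInter _ _).trans (G.incidenceSetEquivNeighborSet v))

theorem deg_subdiv_inr (e : G.edgeSet) : deg (subdiv G) (.inr e) = 2 := by
  obtain ⟨e, he⟩ := e
  induction e using Sym2.ind with
  | _ a b =>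
    have hadj : {x | (subdiv G).Adj (.inr ⟨s(a, b), he⟩) x} = {.inl a, .inl b} := by
      ext (w | f) <;> simp
    rw [deg, hadj, Nat.card_coe_set_eq, Set.ncard_pair (by simpa using G.ne_of_adj he)]

end Degree

section Incidence

variable [DecidableEq V] [DecidableRel G.Adj]

def edgeIncMatrix (R : Type*) [Zero R] [One R] : Matrix V G.edgeSet R :=
  (G.incMatrix R).submatrix id (↑)

theorem adjMatrix_subdiv (R : Type*) [Semiring R] [DecidableRel (subdiv G).Adj] :
    (subdiv G).adjMatrix R = fromBlocks 0 (G.edgeIncMatrix R) (G.edgeIncMatrix R)ᵀ 0 := by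
  ext (v | e) (w | f) <;>
    simp [edgeIncMatrix, incMatrix_apply, incidenceSet, Set.indicator_apply]

variable [Fintype V]

theorem edgeIncMatrix_mul_transpose (R : Type*) [Semiring R] :
    G.edgeIncMatrix R * (G.edgeIncMatrix R)ᵀ = G.incMatrix R * (G.incMatrix R)ᵀ := by
  ext v w
  simp only [mul_apply, edgeIncMatrix, submatrix_apply, transpose_apply, id]
  rw [← Finset.sum_subtype G.edgeFinset (fun _ => mem_edgeFinset)
    (fun e => G.incMatrix R v e * G.incMatrix R w e)]
  refine Finset.sum_subset (Finset.subset_univ _) fun e _ he => ?_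
  rw [incMatrix_of_notMem_incidenceSet G fun h => he (mem_edgeFinset.2 h.1), zero_mul]

theorem stdLap_subdiv_of_isRegularOfDegree {k : ℕ} (hG : G.IsRegularOfDegree k) :
    stdLap (subdiv G) =
      1 - (√(2 * k))⁻¹ • fromBlocks 0 (G.edgeIncMatrix ℝ) (G.edgeIncMatrix ℝ)ᵀ 0 := by
  rw [← adjMatrix_subdiv]
  refine stdLap_eq_one_sub_smul_adjMatrix _ ?_
  rintro (v | e) (w | f) h
  · exact absurd h (not_subdiv_adj_inl_inl G)
  · simp only [deg_subdiv_inl, deg_subdiv_inr, hG.degree_eq]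
    push_cast
    ring
  · simp only [deg_subdiv_inl, deg_subdiv_inr, hG.degree_eq]
    push_cast
    ring
  · exact absurd h (not_subdiv_adj_inr_inr G)

theorem charpoly_stdLap_subdiv_of_isRegularOfDegree {k : ℕ} (hG : G.IsRegularOfDegree k) :
    X ^ Fintype.card V * (stdLap (subdiv G)).charpoly.comp (X + 1) =
      X ^ Fintype.card G.edgeSet *
        ((2 * k : ℝ)⁻¹ • (G.incMatrix ℝ * (G.incMatrix ℝ)ᵀ)).charpoly.comp (X ^ 2) := by
  set c := (√(2 * k))⁻¹
  set B := G.edgeIncMatrix ℝ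
  have hshift : stdLap (subdiv G) - scalar _ 1 = fromBlocks 0 (-c • B) (-c • Bᵀ) 0 := by
    rw [stdLap_subdiv_of_isRegularOfDegree G hG, map_one, sub_sub_cancel_left, fromBlocks_smul,
      fromBlocks_neg]
    simp only [smul_zero, neg_zero, neg_smul]
    rfl
  have hsq : (-c • B) * (-c • Bᵀ) = (2 * k : ℝ)⁻¹ • (G.incMatrix ℝ * (G.incMatrix ℝ)ᵀ) := by
    rw [Matrix.smul_mul, Matrix.mul_smul, smul_smul, edgeIncMatrix_mul_transpose, neg_mul_neg,
      ← mul_inv, Real.mul_self_sqrt (by positivity)]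
  rw [← map_one C, ← charpoly_sub_scalar, hshift, charpoly_fromBlocks_zero₁₁_zero₂₂, hsq]

theorem incMatrix_mul_transpose_top (R : Type*) [Ring R] [Nonempty V] :
    (⊤ : SimpleGraph V).incMatrix R * ((⊤ : SimpleGraph V).incMatrix R)ᵀ =
      scalar V ((Fintype.card V : R) - 2) + vecMulVec 1 1 := by
  rw [incMatrix_mul_transpose]
  ext v w
  rcases eq_or_ne v w with rfl | hvw
  · norm_num [IsRegularOfDegree.top.degree_eq, Nat.cast_sub Fintype.card_pos, sub_add]
  · simp [hvw]

end Incidence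

end SimpleGraph

open SimpleGraph in
theorem charpoly_stdLap_subdiv_top_fin_six :
    (stdLap (subdiv (⊤ : SimpleGraph (Fin 6)))).charpoly =
      (X - 1) ^ 9 * ((X - 1) ^ 2 - C (2 / 5)) ^ 5 * ((X - 1) ^ 2 - 1) := by
  have hreg : (⊤ : SimpleGraph (Fin 6)).IsRegularOfDegree 5 := IsRegularOfDegree.top
  have hgram : (2 * 5 : ℝ)⁻¹ • ((⊤ : SimpleGraph (Fin 6)).incMatrix ℝ *
      ((⊤ : SimpleGraph (Fin 6)).incMatrix ℝ)ᵀ) =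
      scalar (Fin 6) (2 / 5 : ℝ) + vecMulVec (fun _ => 10⁻¹) 1 := by
    rw [incMatrix_mul_transpose_top]
    ext i j
    rcases eq_or_ne i j with rfl | hij
    · norm_num
    · norm_num [hij]
  have hedges : Fintype.card (⊤ : SimpleGraph (Fin 6)).edgeSet = 15 := by
    rw [card_edgeSet, card_edgeFinset_top_eq_card_choose_two]
    rfl
  have hdot : (fun _ => (10 : ℝ)⁻¹) ⬝ᵥ (1 : Fin 6 → ℝ) = 3 / 5 := by
    norm_num [dotProduct]
  have h := charpoly_stdLap_subdiv_of_isRegularOfDegree (⊤ : SimpleGraph (Fin 6)) hreg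
  rw [Nat.cast_ofNat, hgram, charpoly_scalar_add_vecMulVec, hedges, Fintype.card_fin, hdot] at h
  have hC : (C (2 / 5) + C (3 / 5) : ℝ[X]) = 1 := by rw [← C_add]; norm_num
  have hshift : (stdLap (subdiv (⊤ : SimpleGraph (Fin 6)))).charpoly.comp (X + 1) =
      X ^ 9 * (X ^ 2 - C (2 / 5)) ^ 5 * (X ^ 2 - 1) := by
    apply (isRegular_X_pow (R := ℝ) 6).left
    simp only [sub_comp, mul_comp, pow_comp, X_comp, C_comp, Nat.reduceSub] at h
    dsimp only
    rw [h]
    linear_combination -(X ^ 15 * (X ^ 2 - C (2 / 5)) ^ 5) * hC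
  calc (stdLap (subdiv (⊤ : SimpleGraph (Fin 6)))).charpoly
      = ((stdLap (subdiv (⊤ : SimpleGraph (Fin 6)))).charpoly.comp (X + 1)).comp (X - 1) := by
        simp [comp_assoc]
    _ = _ := by simp [hshift, mul_comp]

/-- the spectrum of the standard Laplacian of the subdivision
graph `S(K_6)` of the complete graph `K_6`. -/
theorem stmt_17 :
    spec (subdiv (⊤ : SimpleGraph (Fin 6))) =
      {(0 : ℝ)}
        + 5 • {1 - Real.sqrt (2/5)}
        + 9 • {(1 : ℝ)}
        + 5 • {1 + Real.sqrt (2/5)}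
        + {(2 : ℝ)} := by
  have hr : C (√(2 / 5)) ^ 2 = (C (2 / 5) : ℝ[X]) := by
    rw [← C_pow, Real.sq_sqrt (by norm_num)]
  have hfac : (X - C (1 - √(2 / 5))) * (X - C (1 + √(2 / 5))) = (X - 1) ^ 2 - C (2 / 5 : ℝ) := by
    simp only [map_sub, map_add, map_one]
    linear_combination -hr
  have hcharpoly := charpoly_stdLap_subdiv_top_fin_six
  rw [← hfac] at hcharpoly
  refine Eq.trans ?_ (roots_multiset_prod_X_sub_C _)
  refine congrArg roots ?_
  convert hcharpoly using 1
  -- `spec` takes the characteristic polynomial with the classical `DecidableEq` instance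
  · congr 1
  · simp only [Multiset.map_add, Multiset.map_nsmul, Multiset.map_singleton, Multiset.prod_add,
      Multiset.prod_nsmul, Multiset.prod_singleton, map_zero, map_one, map_ofNat, sub_zero]
    ring
end
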